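/- Good subsets from non-degenerate moves: Let G be a finite simple graph with a, b : V(G) → ℤ≥0, h : V(G) → {0,1}, d_G(u) = a(u) + b(u) + h(u) and min{a(u), b(u)} ≥ 1 for all u, and suppose G has no (a,b)-feasible pair. Let (X_1, X_2) be a degenerate partition of V(G) maximizing the weight ω(X_1,X_2) = e(X_1)+e(X_2)+Σ_{u∈X_1}b(u)+Σ_{v∈X_2}a(v), and subject to that, minimizing |X_1|. Then for any u_1 ∈ X_1 with d_{X_1}(u_1) ≤ a(u_1), there exists a set B ⊆ X_2 ∪ {u_1} with u_1 ∈ B and d_B(v) ≥ b(v) + h(v) for all v ∈ B; and for any u_2 ∈ X_2 with d_{X_2}(u_2) ≤ b(u_2) + h(u_2) − 1, there exists a set A ⊆ X_1 ∪ {u_2} with u_2 ∈ A and d_A(v) ≥ a(v) + 1 for all v ∈ A. -/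
import Mathlib


open scoped Classical

/-- `(A, B)` forms an `(a,b)`-feasible pair in `G`. -/
def FeasiblePair {V : Type*} [DecidableEq V] (G : SimpleGraph V) [DecidableRel G.Adj]
    (a b : V → ℕ) : Prop :=
  ∃ A B : Finset V, A.Nonempty ∧ B.Nonempty ∧ Disjoint A B ∧
    (∀ u ∈ A, a u ≤ (A.filter (G.Adj u)).card) ∧
    (∀ v ∈ B, b v ≤ (B.filter (G.Adj v)).card)

/-- Number of edges of `G` with both endpoints in `X`. -/
noncomputable def edgesIn {V : Type*} [Fintype V] [DecidableEq V]
    (G : SimpleGraph V) [DecidableRel G.Adj] (X : Finset V) : ℕ :=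
  (G.edgeFinset.filter (fun e => ∀ v ∈ e, v ∈ X)).card

/-- The weight `ω(X₁, X₂) = e(X₁) + e(X₂) + Σ_{u ∈ X₁} b(u) + Σ_{v ∈ X₂} a(v)`. -/
noncomputable def wt {V : Type*} [Fintype V] [DecidableEq V]
    (G : SimpleGraph V) [DecidableRel G.Adj] (a b : V → ℕ) (X1 X2 : Finset V) : ℕ :=
  edgesIn G X1 + edgesIn G X2 + ∑ u ∈ X1, b u + ∑ v ∈ X2, a v

/-- A degenerate partition: both parts are non-empty, they partition `V(G)`,
`X₁` is 1-meager and `X₂` is 2-meager. -/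
def DegenPartition {V : Type*} [Fintype V] [DecidableEq V]
    (G : SimpleGraph V) [DecidableRel G.Adj] (a b h : V → ℕ) (X1 X2 : Finset V) : Prop :=
  X1.Nonempty ∧ X2.Nonempty ∧ Disjoint X1 X2 ∧ X1 ∪ X2 = Finset.univ ∧
    (∀ X' ⊆ X1, X'.Nonempty → ∃ x ∈ X', (X'.filter (G.Adj x)).card ≤ a x) ∧
    (∀ X' ⊆ X2, X'.Nonempty → ∃ x ∈ X', (X'.filter (G.Adj x)).card + 1 ≤ b x + h x)

lemma aux_touch {V : Type*} [Fintype V] [DecidableEq V] (G : SimpleGraph V)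
    [DecidableRel G.Adj] (X : Finset V) (u : V) :
    (G.edgeFinset.filter (fun e => u ∈ e ∧ ∀ v ∈ e, v ∈ insert u X)).card
      = (X.filter (G.Adj u)).card := by
  classical
  rw [eq_comm]
  apply Finset.card_bij (fun v _ => s(u, v))
  · intro v hv
    simp only [Finset.mem_filter] at hv ⊢
    refine ⟨by simpa using hv.2, by simp, ?_⟩
    intro w hw
    rw [Sym2.mem_iff] at hw
    rcases hw with rfl | rfl
    · exact Finset.mem_insert_self _ _
    · exact Finset.mem_insert_of_mem hv.1
  · intro v1 _ v2 _ heq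
    exact (Sym2.congr_right).mp heq
  · intro e he
    induction e using Sym2.ind with
    | _ x y =>
      simp only [Finset.mem_filter, SimpleGraph.mem_edgeFinset, SimpleGraph.mem_edgeSet] at he
      obtain ⟨hadj, hue, hsub⟩ := he
      rw [Sym2.mem_iff] at hue
      rcases hue with rfl | rfl
      · refine ⟨y, ?_, rfl⟩
        simp only [Finset.mem_filter]
        have hy : y ∈ insert u X := hsub y (by simp)
        have : y ≠ u := fun h => G.irrefl (h ▸ hadj)
        exact ⟨(Finset.mem_insert.mp hy).resolve_left this, hadj⟩
      · refine ⟨x, ?_, Sym2.eq_swap⟩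
        simp only [Finset.mem_filter]
        have hx : x ∈ insert u X := hsub x (by simp)
        have : x ≠ u := fun h => G.irrefl (h ▸ hadj.symm)
        exact ⟨(Finset.mem_insert.mp hx).resolve_left this, hadj.symm⟩

lemma edgesIn_insert {V : Type*} [Fintype V] [DecidableEq V] (G : SimpleGraph V)
    [DecidableRel G.Adj] (X : Finset V) (u : V) (hu : u ∉ X) :
    edgesIn G (insert u X) = edgesIn G X + (X.filter (G.Adj u)).card := by
  classical
  unfold edgesIn
  rw [← aux_touch G X u]
  have hsplit : G.edgeFinset.filter (fun e => ∀ v ∈ e, v ∈ insert u X)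
      = G.edgeFinset.filter (fun e => ∀ v ∈ e, v ∈ X)
        ∪ G.edgeFinset.filter (fun e => u ∈ e ∧ ∀ v ∈ e, v ∈ insert u X) := by
    ext e
    simp only [Finset.mem_filter, Finset.mem_union]
    constructor
    · rintro ⟨he, hall⟩
      by_cases hue : u ∈ e
      · exact Or.inr ⟨he, hue, hall⟩
      · refine Or.inl ⟨he, fun v hv => ?_⟩
        exact (Finset.mem_insert.mp (hall v hv)).resolve_left (by rintro rfl; exact hue hv)
    · rintro (⟨he, hall⟩ | ⟨he, _, hall⟩)
      · exact ⟨he, fun v hv => Finset.mem_insert_of_mem (hall v hv)⟩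
      · exact ⟨he, hall⟩
  rw [hsplit, Finset.card_union_of_disjoint]
  rw [Finset.disjoint_left]
  intro e he1 he2
  simp only [Finset.mem_filter] at he1 he2
  exact hu (he1.2 u he2.2.1)

/-- Good subsets from non-degenerate moves (Claim 6). -/
theorem good_subsets_from_moves {V : Type*} [Fintype V] [DecidableEq V]
    (G : SimpleGraph V) [DecidableRel G.Adj] (a b h : V → ℕ)
    (hh : ∀ u, h u ≤ 1)
    (hdeg : ∀ u : V, G.degree u = a u + b u + h u)
    (ha : ∀ u, 1 ≤ a u) (hb : ∀ u, 1 ≤ b u)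
    (hnf : ¬ FeasiblePair G a b)
    (X1 X2 : Finset V) (hP : DegenPartition G a b h X1 X2)
    (hmaxw : ∀ Y1 Y2 : Finset V, DegenPartition G a b h Y1 Y2 →
      wt G a b Y1 Y2 ≤ wt G a b X1 X2)
    (hminc : ∀ Y1 Y2 : Finset V, DegenPartition G a b h Y1 Y2 →
      wt G a b Y1 Y2 = wt G a b X1 X2 → X1.card ≤ Y1.card) :
    (∀ u1 ∈ X1, (X1.filter (G.Adj u1)).card ≤ a u1 →
      ∃ B ⊆ insert u1 X2, u1 ∈ B ∧
        ∀ v ∈ B, b v + h v ≤ (B.filter (G.Adj v)).card) ∧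
    (∀ u2 ∈ X2, (X2.filter (G.Adj u2)).card + 1 ≤ b u2 + h u2 →
      ∃ A ⊆ insert u2 X1, u2 ∈ A ∧
        ∀ v ∈ A, a v + 1 ≤ (A.filter (G.Adj v)).card) := by
  obtain ⟨hX1ne, hX2ne, hdisj, huniv, hm1, hm2⟩ := hP
  have hdegree : ∀ v : V, (Finset.univ.filter (G.Adj v)).card = a v + b v + h v := by
    intro v
    rw [← SimpleGraph.neighborFinset_eq_filter, ← hdeg v]; rfl
  have hdegf : ∀ u : V, (X1.filter (G.Adj u)).card + (X2.filter (G.Adj u)).card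
      = a u + b u + h u := by
    intro u
    rw [← hdegree u, ← huniv, Finset.filter_union,
      Finset.card_union_of_disjoint (Finset.disjoint_filter_filter hdisj)]
  constructor
  · intro u1 hu1 hle
    by_cases hY1 : (X1.erase u1).Nonempty
    · set n1 := (X1.filter (G.Adj u1)).card with hn1
      set n2 := (X2.filter (G.Adj u1)).card with hn2
      have hu1X2 : u1 ∉ X2 := Finset.disjoint_left.mp hdisj hu1
      have e1 : edgesIn G X1 = edgesIn G (X1.erase u1) + n1 := by
        conv_lhs => rw [← Finset.insert_erase hu1]
        rw [edgesIn_insert G _ u1 (Finset.notMem_erase _ _)]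
        congr 1
        rw [hn1]
        congr 1
        rw [Finset.filter_erase, Finset.erase_eq_of_notMem]
        simp [G.irrefl]
      have e2 : edgesIn G (insert u1 X2) = edgesIn G X2 + n2 :=
        edgesIn_insert G X2 u1 hu1X2
      have s1 : ∑ u ∈ X1.erase u1, b u + b u1 = ∑ u ∈ X1, b u :=
        Finset.sum_erase_add _ _ hu1
      have s2 : ∑ v ∈ insert u1 X2, a v = a u1 + ∑ v ∈ X2, a v :=
        Finset.sum_insert hu1X2
      have hwt : wt G a b (X1.erase u1) (insert u1 X2) + n1 + b u1
          = wt G a b X1 X2 + n2 + a u1 := by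
        simp only [wt]; omega
      by_cases hmg : ∀ X' ⊆ insert u1 X2, X'.Nonempty →
          ∃ x ∈ X', (X'.filter (G.Adj x)).card + 1 ≤ b x + h x
      · exfalso
        have hD : DegenPartition G a b h (X1.erase u1) (insert u1 X2) := by
          refine ⟨hY1, Finset.insert_nonempty _ _, ?_, ?_, ?_, hmg⟩
          · rw [Finset.disjoint_insert_right]
            exact ⟨Finset.notMem_erase _ _,
              Finset.disjoint_of_subset_left (Finset.erase_subset _ _) hdisj⟩
          · rw [Finset.union_insert, ← Finset.insert_union, Finset.insert_erase hu1]; exact huniv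
          · intro X' hX' hne
            exact hm1 X' (hX'.trans (Finset.erase_subset _ _)) hne
        have hle' := hmaxw _ _ hD
        have hd := hdegf u1
        have heq : wt G a b (X1.erase u1) (insert u1 X2) = wt G a b X1 X2 := by omega
        have hc := hminc _ _ hD heq
        rw [Finset.card_erase_of_mem hu1] at hc
        have : 1 ≤ X1.card := Finset.card_pos.mpr ⟨u1, hu1⟩
        omega
      · push_neg at hmg
        obtain ⟨X', hsub, hne, hall⟩ := hmg
        refine ⟨X', hsub, ?_, fun v hv => by have := hall v hv; omega⟩
        by_contra hu1X'
        have hX'X2 : X' ⊆ X2 := fun x hx =>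
          (Finset.mem_insert.mp (hsub hx)).resolve_left (by rintro rfl; exact hu1X' hx)
        obtain ⟨x, hx, hxle⟩ := hm2 X' hX'X2 hne
        have := hall x hx
        omega
    · rw [Finset.not_nonempty_iff_eq_empty, Finset.erase_eq_empty_iff] at hY1
      have hX1 : X1 = {u1} := hY1.resolve_left (Finset.nonempty_iff_ne_empty.mp hX1ne)
      have huniv' : insert u1 X2 = Finset.univ := by
        rw [← huniv, hX1, ← Finset.insert_eq]
      refine ⟨Finset.univ, by rw [huniv'], Finset.mem_univ _, fun v _ => ?_⟩
      have h1 := hdegree v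
      have h2 := ha v
      omega
  · intro u2 hu2 hle
    by_cases hY2 : (X2.erase u2).Nonempty
    · set m1 := (X1.filter (G.Adj u2)).card with hm1'
      set d2 := (X2.filter (G.Adj u2)).card with hd2'
      have hu2X1 : u2 ∉ X1 := Finset.disjoint_right.mp hdisj hu2
      have e2 : edgesIn G X2 = edgesIn G (X2.erase u2) + d2 := by
        conv_lhs => rw [← Finset.insert_erase hu2]
        rw [edgesIn_insert G _ u2 (Finset.notMem_erase _ _)]
        congr 1
        rw [hd2']
        congr 1
        rw [Finset.filter_erase, Finset.erase_eq_of_notMem]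
        simp [G.irrefl]
      have e1 : edgesIn G (insert u2 X1) = edgesIn G X1 + m1 :=
        edgesIn_insert G X1 u2 hu2X1
      have s2 : ∑ v ∈ X2.erase u2, a v + a u2 = ∑ v ∈ X2, a v :=
        Finset.sum_erase_add _ _ hu2
      have s1 : ∑ u ∈ insert u2 X1, b u = b u2 + ∑ u ∈ X1, b u :=
        Finset.sum_insert hu2X1
      have hwt : wt G a b (insert u2 X1) (X2.erase u2) + d2 + a u2
          = wt G a b X1 X2 + m1 + b u2 := by
        simp only [wt]; omega
      by_cases hmg : ∀ X' ⊆ insert u2 X1, X'.Nonempty →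
          ∃ x ∈ X', (X'.filter (G.Adj x)).card ≤ a x
      · exfalso
        have hD : DegenPartition G a b h (insert u2 X1) (X2.erase u2) := by
          refine ⟨Finset.insert_nonempty _ _, hY2, ?_, ?_, hmg, ?_⟩
          · rw [Finset.disjoint_insert_left]
            exact ⟨Finset.notMem_erase _ _,
              Finset.disjoint_of_subset_right (Finset.erase_subset _ _) hdisj⟩
          · rw [Finset.insert_union, ← Finset.union_insert, Finset.insert_erase hu2]
            exact huniv
          · intro X' hX' hne
            exact hm2 X' (hX'.trans (Finset.erase_subset _ _)) hne
        have hle' := hmaxw _ _ hD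
        have hd := hdegf u2
        have hhu := hh u2
        omega
      · push_neg at hmg
        obtain ⟨X', hsub, hne, hall⟩ := hmg
        refine ⟨X', hsub, ?_, fun v hv => by have := hall v hv; omega⟩
        by_contra hu2X'
        have hX'X1 : X' ⊆ X1 := fun x hx =>
          (Finset.mem_insert.mp (hsub hx)).resolve_left (by rintro rfl; exact hu2X' hx)
        obtain ⟨x, hx, hxle⟩ := hm1 X' hX'X1 hne
        have := hall x hx
        omega
    · rw [Finset.not_nonempty_iff_eq_empty, Finset.erase_eq_empty_iff] at hY2
      have hX2 : X2 = {u2} := hY2.resolve_left (Finset.nonempty_iff_ne_empty.mp hX2ne)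
      have huniv' : insert u2 X1 = Finset.univ := by
        rw [← huniv, hX2, Finset.union_comm, ← Finset.insert_eq]
      refine ⟨Finset.univ, by rw [huniv'], Finset.mem_univ _, fun v _ => ?_⟩
      have h1 := hdegree v
      have h2 := hb v
      omega
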